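/- arXiv:2512.16115 — 4 statements merged into one kernel-verified Lean document; each statement's English description precedes it below -/
import Mathlib

section
/- Let Y be a real random variable on a probability space with 𝔼[e^Y] = 1, 𝔼[|Y|] < ∞ and 𝔼[|Y| e^Y] < ∞, and let r ∈ ℝ, T > 0. Define the European call price as a function of log-strike k by V(k) = e^{−rT} 𝔼[(e^{rT+Y} − e^k)^+], and the Carr–Madan modified price V̂(k) = V(k) − e^{−rT}(e^{rT} − e^k)^+. Then V̂ is integrable on ℝ and for every real z ≠ 0 its Fourier transform satisfies ∫_ℝ e^{izk} V̂(k) dk = (1/(iz(iz+1))) · e^{izrT} · (𝔼[e^{(1+iz)Y}] − 1). -/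
open MeasureTheory Complex Real Set

/-!
Measured in units of the forward price `e^{rT}`, `V̂(k)` is the expectation of the payoff
`g(Y, k - rT)` of the out-of-the-money option: the call for strikes above the forward, the put
below it; put–call parity, where `𝔼[e^Y] = 1` enters, turns the difference of calls defining `V̂`
into a put. For fixed `y`, `g(y, ·)` lives between `0` and `y` with integral
`y e^y - e^y + 1 ≥ 0`, so `‖V̂‖₁ = 𝔼[Y e^Y - e^Y + 1] < ∞` and Fubini applies. The Fourier
transform of `g(y, ·)` is an integral of exponentials over `[0, y]`, and the term `(e^y - 1)/(iz)`
in it has expectation zero.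
-/

/-- `g(y, x)`: the payoff, per unit of forward, of the out-of-the-money option at log-moneyness
`x` when the log-return is `y`; a call for `x ≥ 0`, a put for `x < 0`. -/
noncomputable def otmPayoff (y x : ℝ) : ℝ :=
  if 0 ≤ x then max (Real.exp y - Real.exp x) 0 else max (Real.exp x - Real.exp y) 0

lemma otmPayoff_nonneg (y x : ℝ) : 0 ≤ otmPayoff y x := by
  unfold otmPayoff; split <;> exact le_max_right _ _

lemma measurable_otmPayoff : Measurable fun p : ℝ × ℝ => otmPayoff p.1 p.2 :=
  Measurable.ite (measurableSet_le measurable_const measurable_snd) (by fun_prop) (by fun_prop)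

lemma otmPayoff_eq_indicator_of_nonneg {y : ℝ} (hy : 0 ≤ y) :
    otmPayoff y = (Icc 0 y).indicator fun x => Real.exp y - Real.exp x := by
  funext x
  simp only [otmPayoff, indicator, mem_Icc]
  split_ifs with h0 hx hx
  · exact max_eq_left (sub_nonneg.2 (Real.exp_le_exp.2 hx.2))
  · exact max_eq_right (sub_nonpos.2 (Real.exp_le_exp.2 (not_le.1 fun h => hx ⟨h0, h⟩).le))
  · exact absurd hx.1 h0
  · exact max_eq_right (sub_nonpos.2 (Real.exp_le_exp.2 (by linarith)))

lemma otmPayoff_eq_indicator_of_neg {y : ℝ} (hy : y < 0) :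
    otmPayoff y = (Ico y 0).indicator fun x => Real.exp x - Real.exp y := by
  funext x
  simp only [otmPayoff, indicator, mem_Ico]
  split_ifs with h0 hx hx
  · exact absurd hx.2 (not_lt.2 h0)
  · exact max_eq_right (sub_nonpos.2 (Real.exp_le_exp.2 (by linarith)))
  · exact max_eq_left (sub_nonneg.2 (Real.exp_le_exp.2 hx.1))
  · exact max_eq_right
      (sub_nonpos.2 (Real.exp_le_exp.2 (not_le.1 fun h => hx ⟨h, not_le.1 h0⟩).le))

lemma integrable_otmPayoff (y : ℝ) : Integrable (otmPayoff y) := by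
  rcases le_or_gt 0 y with hy | hy
  · rw [otmPayoff_eq_indicator_of_nonneg hy]
    exact (by fun_prop : Continuous fun x => Real.exp y - Real.exp x).integrableOn_Icc
      |>.integrable_indicator measurableSet_Icc
  · rw [otmPayoff_eq_indicator_of_neg hy]
    exact (by fun_prop : Continuous fun x => Real.exp x - Real.exp y).integrableOn_Icc
      |>.mono_set Ico_subset_Icc_self |>.integrable_indicator measurableSet_Ico

lemma integral_otmPayoff_smul {E : Type*} [NormedAddCommGroup E] [NormedSpace ℝ E]
    (y : ℝ) (f : ℝ → E) :
    ∫ x, otmPayoff y x • f x = ∫ x in 0..y, (Real.exp y - Real.exp x) • f x := by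
  rcases le_or_gt 0 y with hy | hy
  · simp_rw [otmPayoff_eq_indicator_of_nonneg hy, ← indicator_smul_apply_left]
    rw [integral_indicator measurableSet_Icc, integral_Icc_eq_integral_Ioc,
      intervalIntegral.integral_of_le hy]
  · simp_rw [otmPayoff_eq_indicator_of_neg hy, ← indicator_smul_apply_left]
    rw [integral_indicator measurableSet_Ico, integral_Ico_eq_integral_Ioc,
      ← intervalIntegral.integral_of_le hy.le, intervalIntegral.integral_symm,
      ← intervalIntegral.integral_neg]
    simp_rw [← neg_smul, neg_sub]

lemma integral_otmPayoff (y : ℝ) : ∫ x, otmPayoff y x = y * Real.exp y - Real.exp y + 1 := by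
  have h := integral_otmPayoff_smul y fun _ => (1 : ℝ)
  simp only [smul_eq_mul, mul_one] at h
  rw [h, intervalIntegral.integral_sub intervalIntegrable_const
    (Real.continuous_exp.intervalIntegrable _ _), intervalIntegral.integral_const, integral_exp]
  simp only [sub_zero, smul_eq_mul, Real.exp_zero]
  ring

noncomputable def otmPayoffFourier (z y : ℝ) : ℂ :=
  (cexp ((1 + I * z) * y) - 1) / (I * z * (I * z + 1)) - (cexp y - 1) / (I * z)

lemma integral_cexp_mul_otmPayoff {z : ℝ} (hz : z ≠ 0) (y : ℝ) :
    ∫ x : ℝ, cexp (I * z * x) * otmPayoff y x = otmPayoffFourier z y := by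
  have hz' : (z : ℂ) ≠ 0 := ofReal_ne_zero.2 hz
  have hiz : I * z ≠ 0 := mul_ne_zero I_ne_zero hz'
  have hiz1 : 1 + I * z ≠ 0 := fun h => by simpa using congrArg re h
  have hiz1' : I * z + 1 ≠ 0 := by rwa [add_comm]
  have hsplit : ∀ x : ℝ, (Real.exp y - Real.exp x) • cexp (I * z * x) =
      Real.exp y * cexp (I * z * x) - cexp ((1 + I * z) * x) := fun x => by
    rw [real_smul, add_mul, one_mul, Complex.exp_add]; push_cast; ring
  simp_rw [mul_comm (cexp _), ← real_smul, integral_otmPayoff_smul, hsplit]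
  unfold otmPayoffFourier
  rw [intervalIntegral.integral_sub ((by fun_prop : Continuous _).intervalIntegrable _ _)
      ((by fun_prop : Continuous _).intervalIntegrable _ _),
    intervalIntegral.integral_const_mul, integral_exp_mul_complex hiz,
    integral_exp_mul_complex hiz1, add_mul, one_mul, Complex.exp_add]
  simp only [ofReal_zero, mul_zero, Complex.exp_zero, ofReal_exp]
  field_simp
  ring

lemma integral_cexp_mul_comp_sub (z c : ℝ) (f : ℝ → ℂ) :
    ∫ k : ℝ, cexp (I * z * k) * f (k - c) = cexp (I * z * c) * ∫ x : ℝ, cexp (I * z * x) * f x := by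
  rw [← integral_sub_right_eq_self (fun x : ℝ => cexp (I * z * x) * f x) c, ← integral_const_mul]
  congr 1 with k
  rw [← mul_assoc, ← Complex.exp_add]
  push_cast
  ring_nf

lemma exp_neg_mul_max_exp_add_sub (m a b : ℝ) :
    Real.exp (-m) * max (Real.exp (m + a) - Real.exp b) 0 =
      max (Real.exp a - Real.exp (b - m)) 0 := by
  rw [mul_max_of_nonneg _ _ (Real.exp_pos _).le, mul_zero, mul_sub, ← Real.exp_add,
    ← Real.exp_add, neg_add_cancel_left, neg_add_eq_sub]

section Expectation

variable {Ω : Type*} [MeasurableSpace Ω] {μ : Measure Ω} {X : Ω → ℝ}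

lemma integral_otmPayoff_comp [IsProbabilityMeasure μ]
    (hX : Integrable (fun ω => Real.exp (X ω)) μ) (hX1 : ∫ ω, Real.exp (X ω) ∂μ = 1) (x : ℝ) :
    ∫ ω, otmPayoff (X ω) x ∂μ =
      ∫ ω, max (Real.exp (X ω) - Real.exp x) 0 ∂μ - max (1 - Real.exp x) 0 := by
  rcases le_or_gt 0 x with hx | hx
  · simp only [otmPayoff, if_pos hx]
    rw [max_eq_right (sub_nonpos.2 (Real.one_le_exp hx)), sub_zero]
  · have parity : ∀ ω, otmPayoff (X ω) x =
        max (Real.exp (X ω) - Real.exp x) 0 - (Real.exp (X ω) - Real.exp x) := fun ω => by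
      simp only [otmPayoff, if_neg (not_le.2 hx)]
      rcases le_total (Real.exp (X ω)) (Real.exp x) with h | h
      · rw [max_eq_left (sub_nonneg.2 h), max_eq_right (sub_nonpos.2 h)]; ring
      · rw [max_eq_right (sub_nonpos.2 h), max_eq_left (sub_nonneg.2 h)]; ring
    have hcall : Integrable (fun ω => Real.exp (X ω) - Real.exp x) μ :=
      hX.sub (integrable_const _)
    rw [integral_congr_ae (.of_forall parity), integral_sub hcall.pos_part hcall,
      integral_sub hX (integrable_const _), hX1, integral_const, probReal_univ, one_smul,
      max_eq_left (sub_nonneg.2 (Real.exp_le_one_iff.2 hx.le))]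

lemma integrable_otmPayoff_prod [IsFiniteMeasure μ] (hXm : Measurable X)
    (hX : Integrable (fun ω => Real.exp (X ω)) μ)
    (hXX : Integrable (fun ω => X ω * Real.exp (X ω)) μ) (c : ℝ) :
    Integrable (fun p : ℝ × Ω => otmPayoff (X p.2) (p.1 - c)) (volume.prod μ) := by
  have hmeas : Measurable fun p : ℝ × Ω => otmPayoff (X p.2) (p.1 - c) :=
    measurable_otmPayoff.comp ((hXm.comp measurable_snd).prodMk (measurable_fst.sub_const c))
  refine (integrable_prod_iff' hmeas.aestronglyMeasurable).2
    ⟨.of_forall fun ω => (integrable_otmPayoff (X ω)).comp_sub_right c, ?_⟩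
  have hnorm : ∀ ω, ∫ k, ‖otmPayoff (X ω) (k - c)‖ =
      X ω * Real.exp (X ω) - Real.exp (X ω) + 1 := fun ω => by
    simp_rw [Real.norm_of_nonneg (otmPayoff_nonneg _ _)]
    rw [integral_sub_right_eq_self (otmPayoff (X ω)) c, integral_otmPayoff]
  exact ((hXX.sub hX).add (integrable_const 1)).congr (.of_forall fun ω => (hnorm ω).symm)

lemma integrable_cexp_mul_of_re_eq_one (hXm : Measurable X)
    (hX : Integrable (fun ω => Real.exp (X ω)) μ) {w : ℂ} (hw : w.re = 1) :
    Integrable (fun ω => cexp (w * X ω)) μ :=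
  hX.congr' (by fun_prop : Measurable fun ω => cexp (w * X ω)).aestronglyMeasurable
    (.of_forall fun ω => by simp [Complex.norm_exp, hw])

lemma integral_otmPayoffFourier_comp [IsProbabilityMeasure μ] (hXm : Measurable X)
    (hX : Integrable (fun ω => Real.exp (X ω)) μ) (hX1 : ∫ ω, Real.exp (X ω) ∂μ = 1) (z : ℝ) :
    ∫ ω, otmPayoffFourier z (X ω) ∂μ =
      ((∫ ω, cexp ((1 + I * z) * X ω) ∂μ) - 1) / (I * z * (I * z + 1)) := by
  have hΦ := integrable_cexp_mul_of_re_eq_one hXm hX (w := 1 + I * z) (by simp)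
  have hcexp : Integrable (fun ω => cexp (X ω)) μ := by
    simpa using integrable_cexp_mul_of_re_eq_one hXm hX (w := 1) one_re
  have hcexp1 : ∫ ω, cexp (X ω) ∂μ = 1 := by
    simp only [← ofReal_exp]; rw [integral_complex_ofReal, hX1, ofReal_one]
  have hΦ' : Integrable (fun ω => (cexp ((1 + I * z) * X ω) - 1) / (I * z * (I * z + 1))) μ :=
    (hΦ.sub (integrable_const 1)).div_const _
  have hcexp' : Integrable (fun ω => (cexp (X ω) - 1) / (I * z)) μ :=
    (hcexp.sub (integrable_const 1)).div_const _
  unfold otmPayoffFourier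
  rw [integral_sub hΦ' hcexp', integral_div, integral_div, integral_sub hΦ (integrable_const 1),
    integral_sub hcexp (integrable_const 1), hcexp1, integral_const, probReal_univ, one_smul,
    sub_self, zero_div, sub_zero]

end Expectation

theorem carrMadan_european_general
    {Ω : Type*} [MeasurableSpace Ω] (μ : Measure Ω) [IsProbabilityMeasure μ]
    (Y : Ω → ℝ) (hYm : Measurable Y)
    (hexpYint : Integrable (fun ω => Real.exp (Y ω)) μ)
    (hmart : ∫ ω, Real.exp (Y ω) ∂μ = 1)
    (hYexpYint : Integrable (fun ω => |Y ω| * Real.exp (Y ω)) μ)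
    (r T : ℝ)
    (V Vhat : ℝ → ℝ)
    (hV : ∀ k, V k = Real.exp (-(r * T)) *
      ∫ ω, max (Real.exp (r * T + Y ω) - Real.exp k) 0 ∂μ)
    (hVhat : ∀ k, Vhat k = V k -
      Real.exp (-(r * T)) * max (Real.exp (r * T) - Real.exp k) 0) :
    Integrable Vhat volume ∧
      ∀ z : ℝ, z ≠ 0 →
        ∫ k : ℝ, Complex.exp (Complex.I * z * k) * (Vhat k : ℂ) =
          (1 / (Complex.I * z * (Complex.I * z + 1))) *
            Complex.exp (Complex.I * z * (r * T)) *
            ((∫ ω, Complex.exp ((1 + Complex.I * z) * (Y ω : ℂ)) ∂μ) - 1) := by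
  have hVhat_eq : Vhat = fun k => ∫ ω, otmPayoff (Y ω) (k - r * T) ∂μ := funext fun k => by
    rw [integral_otmPayoff_comp hexpYint hmart, hVhat, hV, ← integral_const_mul]
    have hforward : Real.exp (-(r * T)) * max (Real.exp (r * T) - Real.exp k) 0 =
        max (1 - Real.exp (k - r * T)) 0 := by
      simpa using exp_neg_mul_max_exp_add_sub (r * T) 0 k
    simp_rw [exp_neg_mul_max_exp_add_sub, hforward]
  have hYY : Integrable (fun ω => Y ω * Real.exp (Y ω)) μ :=
    hYexpYint.congr' (by fun_prop) (.of_forall fun ω => by simp)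
  have hF := integrable_otmPayoff_prod hYm hexpYint hYY (r * T)
  refine ⟨hVhat_eq ▸ hF.integral_prod_left, fun z hz => ?_⟩
  have hG : Integrable (fun p : ℝ × Ω => cexp (I * z * p.1) * otmPayoff (Y p.2) (p.1 - r * T))
      (volume.prod μ) :=
    hF.ofReal.bdd_mul (c := 1) (by fun_prop) (.of_forall fun p => by simp [Complex.norm_exp])
  calc ∫ k : ℝ, cexp (I * z * k) * (Vhat k : ℂ)
      = ∫ k : ℝ, ∫ ω, cexp (I * z * k) * otmPayoff (Y ω) (k - r * T) ∂μ := by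
        simp_rw [hVhat_eq, ← integral_complex_ofReal, ← integral_const_mul]
    _ = ∫ ω, (∫ k : ℝ, cexp (I * z * k) * otmPayoff (Y ω) (k - r * T)) ∂μ :=
        integral_integral_swap hG
    _ = cexp (I * z * (r * T)) * ∫ ω, otmPayoffFourier z (Y ω) ∂μ := by
        rw [← integral_const_mul]
        refine integral_congr_ae (.of_forall fun ω => ?_)
        beta_reduce
        rw [integral_cexp_mul_comp_sub z (r * T) fun x => (otmPayoff (Y ω) x : ℂ),
          integral_cexp_mul_otmPayoff hz, ofReal_mul]
    _ = _ := by
        rw [integral_otmPayoffFourier_comp hYm hexpYint hmart]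
        ring

/-- Carr–Madan Fourier transform of the modified European call price. -/
theorem carrMadan_european
    {Ω : Type*} [MeasurableSpace Ω] (μ : Measure Ω) [IsProbabilityMeasure μ]
    (Y : Ω → ℝ) (hYm : Measurable Y)
    (hYint : Integrable Y μ)
    (hexpYint : Integrable (fun ω => Real.exp (Y ω)) μ)
    (hmart : ∫ ω, Real.exp (Y ω) ∂μ = 1)
    (hYexpYint : Integrable (fun ω => |Y ω| * Real.exp (Y ω)) μ)
    (r T : ℝ) (hT : 0 < T)
    (V Vhat : ℝ → ℝ)
    (hV : ∀ k, V k = Real.exp (-(r * T)) *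
      ∫ ω, max (Real.exp (r * T + Y ω) - Real.exp k) 0 ∂μ)
    (hVhat : ∀ k, Vhat k = V k -
      Real.exp (-(r * T)) * max (Real.exp (r * T) - Real.exp k) 0) :
    Integrable Vhat volume ∧
      ∀ z : ℝ, z ≠ 0 →
        ∫ k : ℝ, Complex.exp (Complex.I * z * k) * (Vhat k : ℂ) =
          (1 / (Complex.I * z * (Complex.I * z + 1))) *
            Complex.exp (Complex.I * z * (r * T)) *
            ((∫ ω, Complex.exp ((1 + Complex.I * z) * (Y ω : ℂ)) ∂μ) - 1) :=
  carrMadan_european_general μ Y hYm hexpYint hmart hYexpYint r T V Vhat hV hVhat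
end

section
/- Let Y be a real random variable on a probability space with 𝔼[|Y|] < ∞, and let r ∈ ℝ, T > 0. Define the digital (cash-or-nothing) call price as a function of log-strike k by V(k) = e^{−rT} ℙ(rT + Y ≥ k), and the Carr–Madan modified price V̂(k) = V(k) − e^{−rT} 1_{{k ≤ rT}}. Then V̂ is integrable on ℝ and for every real z ≠ 0 its Fourier transform satisfies ∫_ℝ e^{izk} V̂(k) dk = (1/(iz)) · e^{(iz−1)rT} · (𝔼[e^{izY}] − 1). -/
open MeasureTheory Complex Real

/-!
Up to the factor `e^{-rT}` and a shift by `rT`, the modified price is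
`g a = ℙ(Y ≥ a) - 𝟙{a ≤ 0} = 𝔼[𝟙{a ≤ Y} - 𝟙{a ≤ 0}]`. For fixed `y`, the function
`a ↦ 𝟙{a ≤ y} - 𝟙{a ≤ 0}` is `±` the indicator of the interval between `0` and `y`: its `L¹` norm
is `|y|` and its integral against `e^{iza}` is `(e^{izy} - 1) / (iz)`. As `𝔼|Y| < ∞`, Fubini applies
to `(ω, a) ↦ (𝟙{a ≤ Y ω} - 𝟙{a ≤ 0}) e^{iza}`, which gives the integrability of `g` and
`∫ e^{iza} g a da = (𝔼 e^{izY} - 1) / (iz)`; the shift by `rT` multiplies this by `e^{izrT}`.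
-/

open Set
open scoped Interval

noncomputable def signedStep (y a : ℝ) : ℝ := (Iic y).indicator 1 a - (Iic 0).indicator 1 a

lemma signedStep_eq_indicator_Ioc_sub (y a : ℝ) :
    signedStep y a = (Ioc 0 y).indicator 1 a - (Ioc y 0).indicator 1 a := by
  simp only [signedStep, indicator_apply, mem_Iic, mem_Ioc, Pi.one_apply]
  split_ifs <;> grind

lemma norm_signedStep (y a : ℝ) : ‖signedStep y a‖ = (Ι 0 y).indicator 1 a := by
  rw [signedStep_eq_indicator_Ioc_sub]
  rcases le_total 0 y with hy | hy
  · rw [Ioc_eq_empty_of_le hy, indicator_empty, sub_zero, uIoc_of_le hy,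
      norm_indicator_eq_indicator_norm]
    simp [Pi.one_def]
  · rw [Ioc_eq_empty_of_le hy, indicator_empty, zero_sub, norm_neg, uIoc_of_ge hy,
      norm_indicator_eq_indicator_norm]
    simp [Pi.one_def]

lemma measurable_signedStep : Measurable fun p : ℝ × ℝ => signedStep p.1 p.2 :=
  (measurable_const.indicator (measurableSet_le measurable_snd measurable_fst)).sub
    (measurable_const.indicator (measurableSet_le measurable_snd measurable_const))

lemma integrable_signedStep (y : ℝ) : Integrable (signedStep y) := by
  refine (integrable_norm_iff ?_).1 ?_
  · exact (measurable_signedStep.comp measurable_prodMk_left).aestronglyMeasurable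
  · simp_rw [norm_signedStep]
    exact (integrable_indicator_iff measurableSet_uIoc).2 (integrableOn_const measure_Ioc_lt_top.ne)

lemma integral_norm_signedStep (y : ℝ) : ∫ a, ‖signedStep y a‖ = |y| := by
  simp_rw [norm_signedStep]
  rw [integral_indicator_one measurableSet_uIoc, measureReal_def, Real.volume_uIoc, sub_zero,
    ENNReal.toReal_ofReal (abs_nonneg y)]

lemma integral_signedStep_smul {E : Type*} [NormedAddCommGroup E] [NormedSpace ℝ E]
    {f : ℝ → E} {y : ℝ} (hf : IntervalIntegrable f volume 0 y) :
    ∫ a, signedStep y a • f a = ∫ a in 0..y, f a := by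
  simp_rw [signedStep_eq_indicator_Ioc_sub, sub_smul, ← indicator_smul_apply_left, Pi.one_apply,
    one_smul]
  rw [integral_sub (hf.1.integrable_indicator measurableSet_Ioc)
      (hf.2.integrable_indicator measurableSet_Ioc),
    integral_indicator measurableSet_Ioc, integral_indicator measurableSet_Ioc]
  rfl

lemma integral_signedStep_smul_exp {z : ℝ} (hz : z ≠ 0) (y : ℝ) :
    ∫ a, signedStep y a • exp (I * z * a) = (exp (I * z * y) - 1) / (I * z) := by
  have hIz : I * z ≠ 0 := mul_ne_zero I_ne_zero (ofReal_ne_zero.2 hz)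
  have hcont : Continuous fun a : ℝ => exp (I * z * a) := by fun_prop
  rw [integral_signedStep_smul (hcont.intervalIntegrable _ _), integral_exp_mul_complex hIz]
  simp

section Tail

variable {Ω : Type*} [MeasurableSpace Ω] {μ : Measure Ω} {Y : Ω → ℝ}

lemma integral_signedStep_comp [IsProbabilityMeasure μ] (hYm : Measurable Y) (a : ℝ) :
    ∫ ω, signedStep (Y ω) a ∂μ = μ.real {ω | a ≤ Y ω} - (Iic 0).indicator 1 a := by
  have hs : MeasurableSet {ω | a ≤ Y ω} := hYm measurableSet_Ici
  have hstep : (fun ω => signedStep (Y ω) a) =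
      fun ω => {ω | a ≤ Y ω}.indicator 1 ω - (Iic 0).indicator 1 a := by
    ext ω
    simp [signedStep, indicator_apply]
  rw [hstep, integral_sub ((integrable_const 1).indicator hs) (integrable_const _),
    integral_indicator_one hs, integral_const, probReal_univ, one_smul]

lemma integrable_signedStep_comp_prod [SFinite μ] (hYm : Measurable Y) (hY : Integrable Y μ) :
    Integrable (fun p : Ω × ℝ => signedStep (Y p.1) p.2) (μ.prod volume) := by
  refine (integrable_prod_iff ?_).2 ⟨ae_of_all _ fun ω => integrable_signedStep (Y ω), ?_⟩
  · exact (measurable_signedStep.comp (hYm.prodMap measurable_id)).aestronglyMeasurable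
  · simpa only [integral_norm_signedStep] using hY.abs

variable [IsProbabilityMeasure μ] (hYm : Measurable Y) (hY : Integrable Y μ)
include hYm hY

theorem integrable_tail_sub_indicator :
    Integrable fun a => μ.real {ω | a ≤ Y ω} - (Iic 0).indicator 1 a := by
  simpa only [integral_signedStep_comp hYm] using
    (integrable_signedStep_comp_prod hYm hY).integral_prod_right

theorem integral_exp_mul_tail_sub_indicator {z : ℝ} (hz : z ≠ 0) :
    ∫ a : ℝ, exp (I * z * a) * ((μ.real {ω | a ≤ Y ω} - (Iic 0).indicator 1 a : ℝ) : ℂ) =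
      (∫ ω, exp (I * z * Y ω) ∂μ - 1) / (I * z) := by
  have hF : Integrable (Function.uncurry fun ω a => signedStep (Y ω) a • exp (I * z * a))
      (μ.prod volume) :=
    (integrable_signedStep_comp_prod hYm hY).smul_bdd 1 (by fun_prop)
      (ae_of_all _ fun p => by simp [norm_exp])
  calc ∫ a : ℝ, exp (I * z * a) * ((μ.real {ω | a ≤ Y ω} - (Iic 0).indicator 1 a : ℝ) : ℂ)
      = ∫ a : ℝ, ∫ ω, signedStep (Y ω) a • exp (I * z * a) ∂μ := by
        congr 1 with a
        rw [integral_smul_const, integral_signedStep_comp hYm, real_smul, mul_comm]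
    _ = ∫ ω, (∫ a : ℝ, signedStep (Y ω) a • exp (I * z * a)) ∂μ := (integral_integral_swap hF).symm
    _ = ∫ ω, (exp (I * z * Y ω) - 1) / (I * z) ∂μ := by
        simp only [integral_signedStep_smul_exp hz]
    _ = (∫ ω, exp (I * z * Y ω) ∂μ - 1) / (I * z) := by
        rw [integral_div, integral_sub _ (integrable_const 1), integral_const, probReal_univ,
          one_smul]
        exact (integrable_const 1).mono' (by fun_prop) (ae_of_all _ fun ω => by simp [norm_exp])

end Tail

lemma integral_exp_mul_comp_sub (z s : ℝ) (f : ℝ → ℂ) :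
    ∫ k : ℝ, exp (I * z * k) * f (k - s) = exp (I * z * s) * ∫ a : ℝ, exp (I * z * a) * f a := by
  rw [← integral_const_mul,
    ← integral_sub_right_eq_self (fun a : ℝ => exp (I * z * s) * (exp (I * z * a) * f a)) s]
  congr 1 with k
  rw [← mul_assoc, ← Complex.exp_add]
  push_cast
  ring_nf

theorem carrMadan_digital_general
    {Ω : Type*} [MeasurableSpace Ω] (μ : Measure Ω) [IsProbabilityMeasure μ]
    (Y : Ω → ℝ) (hYm : Measurable Y)
    (hYint : Integrable Y μ)
    (r T : ℝ)
    (V Vhat : ℝ → ℝ)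
    (hV : ∀ k, V k = Real.exp (-(r * T)) * (μ {ω | k ≤ r * T + Y ω}).toReal)
    (hVhat : ∀ k, Vhat k = V k -
      Real.exp (-(r * T)) * (if k ≤ r * T then 1 else 0)) :
    Integrable Vhat volume ∧
      ∀ z : ℝ, z ≠ 0 →
        ∫ k : ℝ, Complex.exp (Complex.I * z * k) * (Vhat k : ℂ) =
          (1 / (Complex.I * z)) * Complex.exp ((Complex.I * z - 1) * (r * T)) *
            ((∫ ω, Complex.exp (Complex.I * z * (Y ω : ℂ)) ∂μ) - 1) := by
  set g : ℝ → ℝ := fun a => μ.real {ω | a ≤ Y ω} - (Iic 0).indicator 1 a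
  have hVhat_eq : Vhat = fun k => Real.exp (-(r * T)) * g (k - r * T) := by
    ext k
    simp only [hVhat, hV, g, measureReal_def, indicator_apply, mem_Iic, sub_nonpos, Pi.one_apply,
      ← sub_le_iff_le_add']
    ring
  refine ⟨hVhat_eq ▸ ((integrable_tail_sub_indicator hYm hYint).comp_sub_right _).const_mul _,
    fun z hz => ?_⟩
  calc ∫ k : ℝ, exp (I * z * k) * (Vhat k : ℂ)
      = Real.exp (-(r * T)) * ∫ k : ℝ, exp (I * z * k) * (g (k - r * T) : ℂ) := by
        simp only [hVhat_eq, ofReal_mul, mul_left_comm _ ((Real.exp _ : ℝ) : ℂ),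
          integral_const_mul]
    _ = Real.exp (-(r * T)) * exp (I * z * ((r * T : ℝ) : ℂ)) *
          ((∫ ω, exp (I * z * Y ω) ∂μ - 1) / (I * z)) := by
        rw [integral_exp_mul_comp_sub z (r * T) fun a => (g a : ℂ),
          integral_exp_mul_tail_sub_indicator hYm hYint hz, ← mul_assoc]
    _ = _ := by
        rw [ofReal_exp, ← Complex.exp_add]
        push_cast
        ring_nf

/-- Carr–Madan Fourier transform of the modified digital (cash-or-nothing) call price. -/
theorem carrMadan_digital
    {Ω : Type*} [MeasurableSpace Ω] (μ : Measure Ω) [IsProbabilityMeasure μ]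
    (Y : Ω → ℝ) (hYm : Measurable Y)
    (hYint : Integrable Y μ)
    (r T : ℝ) (hT : 0 < T)
    (V Vhat : ℝ → ℝ)
    (hV : ∀ k, V k = Real.exp (-(r * T)) * (μ {ω | k ≤ r * T + Y ω}).toReal)
    (hVhat : ∀ k, Vhat k = V k -
      Real.exp (-(r * T)) * (if k ≤ r * T then 1 else 0)) :
    Integrable Vhat volume ∧
      ∀ z : ℝ, z ≠ 0 →
        ∫ k : ℝ, Complex.exp (Complex.I * z * k) * (Vhat k : ℂ) =
          (1 / (Complex.I * z)) * Complex.exp ((Complex.I * z - 1) * (r * T)) *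
            ((∫ ω, Complex.exp (Complex.I * z * (Y ω : ℂ)) ∂μ) - 1) :=
  carrMadan_digital_general μ Y hYm hYint r T V Vhat hV hVhat
end

section
/- Let Y be a real random variable on a probability space with 𝔼[|Y|] < ∞, let r ∈ ℝ, T > 0, and let Y∧ be a Gaussian random variable with mean −T/2 and variance T. Define V(k) = e^{−rT} ℙ(rT + Y ≥ k), the smooth offset term V∧(k) = e^{−rT} ℙ(rT + Y∧ ≥ k), and the modified price V̂(k) = V(k) − V∧(k). Then V̂ is integrable on ℝ and for every real z ≠ 0, ∫_ℝ e^{izk} V̂(k) dk = (1/(iz)) · e^{(iz−1)rT} · (𝔼[e^{izY}] − exp(−(T/2)(iz + z²))). -/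
/-!
Since `1{k ≤ x} - 1{k ≤ 0} = 1_{(0,x]}(k) - 1_{(x,0]}(k)`, the tail `P[k, ∞)` offset by the step
`1{k ≤ 0}` is `∫ (1{k ≤ x} - 1{k ≤ 0}) dP(x)`, whose absolute value integrates over `k` to
`∫ |x| dP(x) < ∞`. Fubini then turns its Fourier transform into
`∫ (∫_0^x e^{izk} dk) dP(x) = (φ_P(z) - 1) / (iz)`. The steps cancel in the difference of the tails
of the laws of `rT + Y` and `rT + Y∧`, and the discount factor together with the shift by `rT`
contributes `e^{(iz - 1) rT}`.
-/

open MeasureTheory Complex Real ProbabilityTheory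
open Set Function
open scoped Interval

noncomputable def tailOffset (x k : ℝ) : ℝ := (Ici k).indicator 1 x - (Ici k).indicator 1 0

lemma tailOffset_eq_indicator_sub_indicator (x k : ℝ) :
    tailOffset x k = (Ioc 0 x).indicator 1 k - (Ioc x 0).indicator 1 k := by
  simp only [tailOffset, indicator_apply, mem_Ici, mem_Ioc, Pi.one_apply]
  split_ifs <;> grind

lemma measurable_tailOffset : Measurable (uncurry tailOffset) := by
  simp only [uncurry_def, tailOffset, indicator_apply, mem_Ici, Pi.one_apply]
  exact (Measurable.ite (measurableSet_le measurable_snd measurable_fst) measurable_const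
    measurable_const).sub
    (Measurable.ite (measurableSet_le measurable_snd measurable_const) measurable_const
    measurable_const)

lemma integrable_tailOffset (x : ℝ) : Integrable (tailOffset x) := by
  rw [funext (tailOffset_eq_indicator_sub_indicator x)]
  exact ((integrableOn_const measure_Ioc_lt_top.ne).integrable_indicator measurableSet_Ioc).sub
    ((integrableOn_const measure_Ioc_lt_top.ne).integrable_indicator measurableSet_Ioc)

lemma abs_tailOffset (x k : ℝ) : |tailOffset x k| = (Ι 0 x).indicator 1 k := by
  simp only [tailOffset, indicator_apply, mem_Ici, uIoc, mem_Ioc, Pi.one_apply]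
  split_ifs <;> grind

lemma integral_abs_tailOffset (x : ℝ) : ∫ k, |tailOffset x k| = |x| := by
  simp_rw [abs_tailOffset, integral_indicator_one measurableSet_uIoc, measureReal_def,
    Real.volume_uIoc]
  simp

lemma integral_tailOffset_smul {E : Type*} [NormedAddCommGroup E] [NormedSpace ℝ E] {g : ℝ → E}
    {x : ℝ} (hg : IntervalIntegrable g volume 0 x) :
    ∫ k, tailOffset x k • g k = ∫ k in 0..x, g k := by
  have : ∀ k, tailOffset x k • g k = (Ioc 0 x).indicator g k - (Ioc x 0).indicator g k := by
    intro k
    rw [tailOffset_eq_indicator_sub_indicator, sub_smul]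
    simp only [indicator_apply, Pi.one_apply]
    split_ifs <;> simp
  simp_rw [this]
  rw [integral_sub (hg.1.integrable_indicator measurableSet_Ioc)
    (hg.2.integrable_indicator measurableSet_Ioc), integral_indicator measurableSet_Ioc,
    integral_indicator measurableSet_Ioc, intervalIntegral]

lemma integrable_id_map_const_add {R : Measure ℝ} [IsFiniteMeasure R] (hR : Integrable id R)
    (c : ℝ) : Integrable id (R.map (c + ·)) :=
  (integrable_map_measure aestronglyMeasurable_id (measurable_const_add c).aemeasurable).2
    ((integrable_const c).add hR)

lemma measureReal_map_const_add_Ici (R : Measure ℝ) (c k : ℝ) :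
    (R.map (c + ·)).real (Ici k) = R.real {x | k ≤ c + x} :=
  map_measureReal_apply (measurable_const_add c) measurableSet_Ici

variable {P : Measure ℝ}

lemma integrable_uncurry_tailOffset [SFinite P] (hP : Integrable id P) :
    Integrable (uncurry tailOffset) (P.prod volume) := by
  refine (integrable_prod_iff measurable_tailOffset.aestronglyMeasurable).2
    ⟨ae_of_all _ integrable_tailOffset, ?_⟩
  simp only [uncurry_apply_pair, Real.norm_eq_abs, integral_abs_tailOffset]
  exact hP.abs

lemma integral_tailOffset [IsProbabilityMeasure P] (k : ℝ) :
    ∫ x, tailOffset x k ∂P = P.real (Ici k) - (Ici k).indicator 1 0 := by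
  simp only [tailOffset]
  rw [integral_sub ((integrable_const 1).indicator measurableSet_Ici) (integrable_const _),
    integral_indicator_one measurableSet_Ici, integral_const, probReal_univ, one_smul]

lemma integrable_measureReal_Ici_sub_indicator [IsProbabilityMeasure P] (hP : Integrable id P) :
    Integrable (fun k ↦ P.real (Ici k) - (Ici k).indicator 1 0) := by
  simpa only [uncurry_apply_pair, integral_tailOffset] using
    (integrable_uncurry_tailOffset hP).integral_prod_right

lemma integral_cexp_mul_measureReal_Ici_sub_indicator [IsProbabilityMeasure P]
    (hP : Integrable id P) {z : ℝ} (hz : z ≠ 0) :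
    ∫ k : ℝ, cexp (z * k * I) * ((P.real (Ici k) - (Ici k).indicator 1 0 : ℝ) : ℂ) =
      (charFun P z - 1) / (z * I) := by
  have hzI : (z * I : ℂ) ≠ 0 := mul_ne_zero (ofReal_ne_zero.2 hz) I_ne_zero
  set F : ℝ × ℝ → ℂ := fun p ↦ tailOffset p.1 p.2 • cexp (z * p.2 * I)
  have hF : Integrable F (P.prod volume) := by
    refine (integrable_uncurry_tailOffset hP).norm.mono'
      (measurable_tailOffset.smul (by fun_prop)).aestronglyMeasurable (ae_of_all _ fun p ↦ ?_)
    simp only [F, norm_smul, Complex.norm_exp, uncurry_def]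
    simp
  calc ∫ k : ℝ, cexp (z * k * I) * ((P.real (Ici k) - (Ici k).indicator 1 0 : ℝ) : ℂ)
      = ∫ k, ∫ x, F (x, k) ∂P := by
        congr 1 with k
        simp only [F]
        rw [integral_smul_const, integral_tailOffset, Complex.real_smul, mul_comm]
    _ = ∫ x, (∫ k, F (x, k)) ∂P := (integral_integral_swap hF).symm
    _ = ∫ x, (cexp (z * x * I) - 1) / (z * I) ∂P := by
        congr 1 with x
        simp only [F, mul_right_comm _ _ I]
        rw [integral_tailOffset_smul ((by fun_prop : Continuous _).intervalIntegrable _ _),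
          integral_exp_mul_complex hzI]
        simp
    _ = (charFun P z - 1) / (z * I) := by
        have hexp : Integrable (fun x : ℝ ↦ cexp (z * x * I)) P :=
          (integrable_const (1 : ℝ)).mono' (by fun_prop)
            (ae_of_all _ fun x ↦ by simp [Complex.norm_exp])
        rw [integral_div, integral_sub hexp (integrable_const 1), integral_const, probReal_univ,
          one_smul, charFun_apply_real]

variable {Q : Measure ℝ} [IsProbabilityMeasure P] [IsProbabilityMeasure Q]

lemma integrable_measureReal_Ici_sub_measureReal_Ici (hP : Integrable id P)
    (hQ : Integrable id Q) : Integrable (fun k ↦ P.real (Ici k) - Q.real (Ici k)) := by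
  refine ((integrable_measureReal_Ici_sub_indicator hP).sub
    (integrable_measureReal_Ici_sub_indicator hQ)).congr (ae_of_all _ fun k ↦ ?_)
  exact sub_sub_sub_cancel_right _ _ _

lemma integral_cexp_mul_measureReal_Ici_sub_measureReal_Ici (hP : Integrable id P)
    (hQ : Integrable id Q) {z : ℝ} (hz : z ≠ 0) :
    ∫ k : ℝ, cexp (z * k * I) * ((P.real (Ici k) - Q.real (Ici k) : ℝ) : ℂ) =
      (charFun P z - charFun Q z) / (z * I) := by
  have hint {R : Measure ℝ} [IsProbabilityMeasure R] (hR : Integrable id R) :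
      Integrable fun k : ℝ ↦
        cexp (z * k * I) * ((R.real (Ici k) - (Ici k).indicator 1 0 : ℝ) : ℂ) :=
    (integrable_measureReal_Ici_sub_indicator hR).ofReal.bdd_mul (c := 1) (by fun_prop)
      (ae_of_all _ fun k ↦ by simp [Complex.norm_exp])
  have hsub := integral_sub (hint hP) (hint hQ)
  simp only [← mul_sub, ← ofReal_sub, sub_sub_sub_cancel_right] at hsub
  rw [hsub, integral_cexp_mul_measureReal_Ici_sub_indicator hP hz,
    integral_cexp_mul_measureReal_Ici_sub_indicator hQ hz, ← sub_div, sub_sub_sub_cancel_right]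

lemma integrable_measureReal_le_const_add_sub (hP : Integrable id P) (hQ : Integrable id Q)
    (c : ℝ) : Integrable (fun k ↦ P.real {x | k ≤ c + x} - Q.real {x | k ≤ c + x}) := by
  have := Measure.isProbabilityMeasure_map (μ := P) (measurable_const_add c).aemeasurable
  have := Measure.isProbabilityMeasure_map (μ := Q) (measurable_const_add c).aemeasurable
  simpa only [measureReal_map_const_add_Ici] using integrable_measureReal_Ici_sub_measureReal_Ici
    (integrable_id_map_const_add hP c) (integrable_id_map_const_add hQ c)

lemma integral_cexp_mul_measureReal_le_const_add_sub (hP : Integrable id P)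
    (hQ : Integrable id Q) (c : ℝ) {z : ℝ} (hz : z ≠ 0) :
    ∫ k : ℝ, cexp (z * k * I) * ((P.real {x | k ≤ c + x} - Q.real {x | k ≤ c + x} : ℝ) : ℂ) =
      (charFun P z - charFun Q z) * cexp (z * c * I) / (z * I) := by
  have := Measure.isProbabilityMeasure_map (μ := P) (measurable_const_add c).aemeasurable
  have := Measure.isProbabilityMeasure_map (μ := Q) (measurable_const_add c).aemeasurable
  simp_rw [← measureReal_map_const_add_Ici]
  rw [integral_cexp_mul_measureReal_Ici_sub_measureReal_Ici (integrable_id_map_const_add hP c)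
    (integrable_id_map_const_add hQ c) hz, charFun_map_const_add, charFun_map_const_add,
    RCLike.inner_apply, conj_trivial, ofReal_mul, ← sub_mul]

lemma charFun_map_eq_integral {Ω : Type*} [MeasurableSpace Ω] {μ : Measure Ω} {X : Ω → ℝ}
    (hX : AEMeasurable X μ) (t : ℝ) : charFun (μ.map X) t = ∫ ω, cexp (I * t * X ω) ∂μ := by
  rw [charFun_apply_real, integral_map hX (by fun_prop)]
  congr with ω
  ring_nf

/-- SOA (smooth offset) Fourier transform identity for digital options
(digital case of the paper's Theorem 3.1). -/
theorem soa_digital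
    {Ω : Type*} [MeasurableSpace Ω] (μ : Measure Ω) [IsProbabilityMeasure μ]
    (Y : Ω → ℝ) (hYm : Measurable Y)
    (hYint : Integrable Y μ)
    (r T : ℝ) (hT : 0 < T)
    (V Vwedge Vhat : ℝ → ℝ)
    (hV : ∀ k, V k = Real.exp (-(r * T)) * (μ {ω | k ≤ r * T + Y ω}).toReal)
    (hVwedge : ∀ k, Vwedge k = Real.exp (-(r * T)) *
      ((gaussianReal (-(T / 2)) (Real.toNNReal T)) {y | k ≤ r * T + y}).toReal)
    (hVhat : ∀ k, Vhat k = V k - Vwedge k) :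
    Integrable Vhat volume ∧
      ∀ z : ℝ, z ≠ 0 →
        ∫ k : ℝ, Complex.exp (Complex.I * z * k) * (Vhat k : ℂ) =
          (1 / (Complex.I * z)) * Complex.exp ((Complex.I * z - 1) * (r * T)) *
            ((∫ ω, Complex.exp (Complex.I * z * (Y ω : ℂ)) ∂μ) -
              Complex.exp (-(T / 2) * (Complex.I * z + (z : ℂ) ^ 2))) := by
  have := Measure.isProbabilityMeasure_map (μ := μ) hYm.aemeasurable
  set G := gaussianReal (-(T / 2)) (Real.toNNReal T)
  have hY : Integrable id (μ.map Y) :=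
    (integrable_map_measure aestronglyMeasurable_id hYm.aemeasurable).2 hYint
  have hG : Integrable id G := (memLp_id_gaussianReal 1).integrable le_rfl
  have hVhat_eq (k : ℝ) : Vhat k = Real.exp (-(r * T)) *
      ((μ.map Y).real {y | k ≤ r * T + y} - G.real {y | k ≤ r * T + y}) := by
    rw [hVhat, hV, hVwedge, mul_sub, map_measureReal_apply hYm
      (measurableSet_le measurable_const (measurable_const_add _))]
    rfl
  refine ⟨((integrable_measureReal_le_const_add_sub hY hG (r * T)).const_mul _).congr
    (ae_of_all _ fun k ↦ (hVhat_eq k).symm), fun z hz ↦ ?_⟩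
  have hdiscount : cexp ((I * z - 1) * (r * T)) =
      cexp (-(r * T) : ℝ) * cexp (r * T * z * I) := by
    rw [← Complex.exp_add]
    push_cast
    ring_nf
  calc ∫ k : ℝ, cexp (I * z * k) * (Vhat k : ℂ)
      = cexp (-(r * T) : ℝ) * ∫ k : ℝ, cexp (z * k * I) *
          (((μ.map Y).real {y | k ≤ r * T + y} - G.real {y | k ≤ r * T + y} : ℝ) : ℂ) := by
        rw [← integral_const_mul]
        congr 1 with k
        rw [hVhat_eq, ofReal_mul, ofReal_exp]
        ring_nf
    _ = _ := by
        rw [integral_cexp_mul_measureReal_le_const_add_sub hY hG _ hz,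
          charFun_map_eq_integral hYm.aemeasurable, charFun_gaussianReal,
          Real.coe_toNNReal T hT.le, hdiscount]
        push_cast
        ring_nf
end

section
/- Let t > 0, ν > 0, σ > 0 and θ ∈ ℝ with θν + (1/2)σ²ν < 1. Let G be a Gamma-distributed random variable with shape t/ν and rate 1/ν, let Z be a standard normal random variable independent of G, and set Y = θG + σ√G · Z. Then e^Y is integrable with 𝔼[e^Y] = (1 − θν − (1/2)σ²ν)^{−t/ν}; consequently, with the compensator ζ = (1/ν)·ln(1 − θν − (1/2)σ²ν), one has 𝔼[e^{ζt + Y}] = 1. -/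
/-!
Conditionally on `G = x`, the exponent `θ x + σ √x Z` is Gaussian with mean `θ x` and
variance `σ² x`, so integrating out `Z` first turns `𝔼[e^Y]` into the Gamma moment generating
function `𝔼[e^{(θ + σ²/2) G}]`. Multiplying the `Gamma(a, r)` density by `e^{s x}` gives
`(r / (r - s))^a` times the `Gamma(a, r - s)` density, whence
`𝔼[e^Y] = (1 - θν - σ²ν/2)^{-t/ν}`. Everything is computed for the nonnegative integrand in
`ℝ≥0∞`, which yields integrability at the same time.
-/

open MeasureTheory Complex Real ProbabilityTheory

open scoped ENNReal NNReal

lemma gammaPDF_mul_ofReal_exp {a r s : ℝ} (hr : 0 < r) (hs : s < r) (x : ℝ) :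
    gammaPDF a r x * ENNReal.ofReal (rexp (s * x)) =
      ENNReal.ofReal ((r / (r - s)) ^ a) * gammaPDF a (r - s) x := by
  have hrs : 0 < r - s := sub_pos.2 hs
  simp only [gammaPDF, gammaPDFReal]
  rw [← ENNReal.ofReal_mul' (exp_pos _).le, ← ENNReal.ofReal_mul (by positivity)]
  congr 1
  split_ifs
  · rw [div_rpow hr.le hrs.le]
    field_simp
    rw [mul_assoc, ← Real.exp_add]
    ring_nf
  · simp

lemma lintegral_exp_mul_gammaMeasure {a r s : ℝ} (ha : 0 < a) (hr : 0 < r) (hs : s < r) :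
    ∫⁻ x, ENNReal.ofReal (rexp (s * x)) ∂gammaMeasure a r =
      ENNReal.ofReal ((r / (r - s)) ^ a) := by
  rw [gammaMeasure, lintegral_withDensity_eq_lintegral_mul _ (f := gammaPDF a r)
    (measurable_gammaPDFReal a r).ennreal_ofReal (by fun_prop)]
  simp only [Pi.mul_apply, gammaPDF_mul_ofReal_exp hr hs]
  rw [lintegral_const_mul _ (f := gammaPDF a (r - s))
      (measurable_gammaPDFReal a (r - s)).ennreal_ofReal,
    lintegral_gammaPDF_eq_one ha (sub_pos.2 hs), mul_one]

lemma ae_nonneg_gammaMeasure (a r : ℝ) : ∀ᵐ x ∂gammaMeasure a r, 0 ≤ x := by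
  simp only [ae_iff, not_le]
  exact (withDensity_apply _ measurableSet_Iio).trans
    (lintegral_gammaPDF_of_nonpos le_rfl)

lemma lintegral_exp_mul_gaussianReal (m : ℝ) (v : ℝ≥0) (c : ℝ) :
    ∫⁻ y, ENNReal.ofReal (rexp (c * y)) ∂gaussianReal m v =
      ENNReal.ofReal (rexp (m * c + v * c ^ 2 / 2)) := by
  rw [← ofReal_integral_eq_lintegral_ofReal (integrable_exp_mul_gaussianReal c)
    (ae_of_all _ fun _ ↦ (exp_pos _).le)]
  exact congrArg ENNReal.ofReal (congrFun mgf_id_gaussianReal c)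

lemma lintegral_exp_normalVarianceMeanMixture {Ω : Type*} [MeasurableSpace Ω]
    {μ : Measure Ω} [IsFiniteMeasure μ] {G Z : Ω → ℝ} (hGm : AEMeasurable G μ)
    (hZm : AEMeasurable Z μ) (hG : ∀ᵐ ω ∂μ, 0 ≤ G ω) (hZ : μ.map Z = gaussianReal 0 1)
    (hindep : IndepFun G Z μ) (θ σ : ℝ) :
    ∫⁻ ω, ENNReal.ofReal (rexp (θ * G ω + σ * √(G ω) * Z ω)) ∂μ =
      ∫⁻ ω, ENNReal.ofReal (rexp ((θ + σ ^ 2 / 2) * G ω)) ∂μ := by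
  set F : ℝ × ℝ → ℝ≥0∞ := fun p ↦
    ENNReal.ofReal (rexp (θ * p.1 + σ * √p.1 * p.2))
  have hF : Measurable F := by fun_prop
  have hlaw : μ.map (fun ω ↦ (G ω, Z ω)) = (μ.map G).prod (gaussianReal 0 1) := by
    rw [← hZ]; exact hindep.map_prod_eq_prod_map_map hGm hZm
  have hinner (x : ℝ) : ∫⁻ y, F (x, y) ∂gaussianReal 0 1 =
      ENNReal.ofReal (rexp (θ * x + σ ^ 2 * √x ^ 2 / 2)) := by
    simp only [F, Real.exp_add, ENNReal.ofReal_mul (exp_pos _).le]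
    rw [lintegral_const_mul _ (by fun_prop), lintegral_exp_mul_gaussianReal]
    congr 3
    push_cast
    ring
  calc ∫⁻ ω, F (G ω, Z ω) ∂μ
      = ∫⁻ x, ∫⁻ y, F (x, y) ∂gaussianReal 0 1 ∂μ.map G := by
        rw [← lintegral_map' hF.aemeasurable (hGm.prodMk hZm), hlaw,
          lintegral_prod _ hF.aemeasurable]
    _ = ∫⁻ ω, ENNReal.ofReal (rexp (θ * G ω + σ ^ 2 * √(G ω) ^ 2 / 2)) ∂μ := by
        simp only [hinner]
        exact lintegral_map' (by fun_prop) hGm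
    _ = _ := by
        refine lintegral_congr_ae (hG.mono fun ω hω ↦ ?_)
        beta_reduce
        rw [sq_sqrt hω]
        ring_nf

lemma integrable_and_integral_eq_of_lintegral_ofReal_eq {α : Type*}
    [MeasurableSpace α] {μ : Measure α} {f : α → ℝ} (hfm : AEStronglyMeasurable f μ)
    (hf : 0 ≤ᵐ[μ] f) {c : ℝ}
    (hc : 0 ≤ c) (h : ∫⁻ x, ENNReal.ofReal (f x) ∂μ = ENNReal.ofReal c) :
    Integrable f μ ∧ ∫ x, f x ∂μ = c := by
  refine ⟨(lintegral_ofReal_ne_top_iff_integrable hfm hf).1 (h ▸ ENNReal.ofReal_ne_top), ?_⟩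
  rw [integral_eq_lintegral_of_nonneg_ae hf hfm, h, ENNReal.toReal_ofReal hc]

lemma lintegral_exp_varianceGamma {Ω : Type*} [MeasurableSpace Ω] {μ : Measure Ω}
    [IsFiniteMeasure μ] {a r θ σ : ℝ} (ha : 0 < a) (hr : 0 < r) (hs : θ + σ ^ 2 / 2 < r)
    {G Z : Ω → ℝ} (hGm : AEMeasurable G μ) (hZm : AEMeasurable Z μ)
    (hG : μ.map G = gammaMeasure a r) (hZ : μ.map Z = gaussianReal 0 1)
    (hindep : IndepFun G Z μ) :
    ∫⁻ ω, ENNReal.ofReal (rexp (θ * G ω + σ * √(G ω) * Z ω)) ∂μ =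
      ENNReal.ofReal ((r / (r - (θ + σ ^ 2 / 2))) ^ a) := by
  have hG0 : ∀ᵐ ω ∂μ, 0 ≤ G ω := ae_of_ae_map hGm (hG ▸ ae_nonneg_gammaMeasure a r)
  rw [lintegral_exp_normalVarianceMeanMixture hGm hZm hG0 hZ hindep,
    ← lintegral_map' (f := fun x ↦ ENNReal.ofReal (rexp ((θ + σ ^ 2 / 2) * x)))
      (by fun_prop) hGm,
    hG, lintegral_exp_mul_gammaMeasure ha hr hs]

theorem varianceGamma_compensator_general
    {Ω : Type*} [MeasurableSpace Ω] (μ : Measure Ω) [IsProbabilityMeasure μ]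
    (t ν σ θ : ℝ) (ht : 0 < t) (hν : 0 < ν)
    (hlt : θ * ν + σ ^ 2 * ν / 2 < 1)
    (G Z : Ω → ℝ)
    (hG : Measure.map G μ = gammaMeasure (t / ν) (1 / ν))
    (hZ : Measure.map Z μ = gaussianReal 0 1)
    (hindep : IndepFun G Z μ) :
    Integrable (fun ω => Real.exp (θ * G ω + σ * Real.sqrt (G ω) * Z ω)) μ ∧
    ∫ ω, Real.exp (θ * G ω + σ * Real.sqrt (G ω) * Z ω) ∂μ =
      (1 - θ * ν - σ ^ 2 * ν / 2) ^ (-(t / ν)) ∧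
    ∫ ω, Real.exp ((1 / ν) * Real.log (1 - θ * ν - σ ^ 2 * ν / 2) * t +
        (θ * G ω + σ * Real.sqrt (G ω) * Z ω)) ∂μ = 1 := by
  set K := 1 - θ * ν - σ ^ 2 * ν / 2 with hK
  have hK0 : 0 < K := by rw [hK]; linarith
  have hs : θ + σ ^ 2 / 2 < 1 / ν := by rw [lt_div_iff₀ hν]; linarith
  have hrate : 1 / ν / (1 / ν - (θ + σ ^ 2 / 2)) = K⁻¹ := by
    rw [show 1 / ν - (θ + σ ^ 2 / 2) = K / ν by field_simp; ring]
    field_simp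
  have ha : 0 < t / ν := div_pos ht hν
  have hr : 0 < 1 / ν := one_div_pos.2 hν
  have := isProbabilityMeasure_gammaMeasure ha hr
  have hGm : AEMeasurable G μ := aemeasurable_of_map_neZero (by rw [hG]; infer_instance)
  have hZm : AEMeasurable Z μ := aemeasurable_of_map_neZero (by rw [hZ]; infer_instance)
  have hlintegral := lintegral_exp_varianceGamma ha hr hs hGm hZm hG hZ hindep
  rw [hrate, inv_rpow hK0.le, ← rpow_neg hK0.le] at hlintegral
  obtain ⟨hint, hmean⟩ := integrable_and_integral_eq_of_lintegral_ofReal_eq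
    (by fun_prop) (ae_of_all _ fun _ ↦ (exp_pos _).le) (by positivity) hlintegral
  refine ⟨hint, hmean, ?_⟩
  simp_rw [Real.exp_add (1 / ν * Real.log K * t)]
  rw [integral_const_mul, hmean, show 1 / ν * Real.log K * t = Real.log K * (t / ν) by ring,
    ← rpow_def_of_pos hK0, ← rpow_add hK0, add_neg_cancel, rpow_zero]

/-- Martingale compensator for the exponential variance Gamma model: if
`G ~ Gamma(t/ν, 1/ν)`, `Z ~ N(0,1)` independent of `G`, `Y = θG + σ√G·Z` and
`θν + ½σ²ν < 1`, then `e^Y` is integrable with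
`𝔼[e^Y] = (1 - θν - ½σ²ν)^{-t/ν}`, and with `ζ = (1/ν)·ln(1 - θν - ½σ²ν)` one has
`𝔼[e^{ζt + Y}] = 1`. -/
theorem varianceGamma_compensator
    {Ω : Type*} [MeasurableSpace Ω] (μ : Measure Ω) [IsProbabilityMeasure μ]
    (t ν σ θ : ℝ) (ht : 0 < t) (hν : 0 < ν) (hσ : 0 < σ)
    (hlt : θ * ν + σ ^ 2 * ν / 2 < 1)
    (G Z : Ω → ℝ) (hGm : Measurable G) (hZm : Measurable Z)
    (hG : Measure.map G μ = gammaMeasure (t / ν) (1 / ν))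
    (hZ : Measure.map Z μ = gaussianReal 0 1)
    (hindep : IndepFun G Z μ) :
    Integrable (fun ω => Real.exp (θ * G ω + σ * Real.sqrt (G ω) * Z ω)) μ ∧
    ∫ ω, Real.exp (θ * G ω + σ * Real.sqrt (G ω) * Z ω) ∂μ =
      (1 - θ * ν - σ ^ 2 * ν / 2) ^ (-(t / ν)) ∧
    ∫ ω, Real.exp ((1 / ν) * Real.log (1 - θ * ν - σ ^ 2 * ν / 2) * t +
        (θ * G ω + σ * Real.sqrt (G ω) * Z ω)) ∂μ = 1 :=
  varianceGamma_compensator_general μ t ν σ θ ht hν hlt G Z hG hZ hindep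
end
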